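/- Let M, N be positive integers, let U₁, V₁ : ℤ → ℝ → Matrix (Fin M) (Fin M) ℝ and U₂, V₂ : ℤ → ℝ → Matrix (Fin N) (Fin N) ℝ be lattice matrix-valued functions, with U₁(n, ·) and U₂(n, ·) differentiable in t for each site n, satisfying the discrete zero curvature equations ∂_t U₁(n,t) = V₁(n+1,t) U₁(n,t) − U₁(n,t) V₁(n,t) and ∂_t U₂(n,t) = V₂(n+1,t) U₂(n,t) − U₂(n,t) V₂(n,t) for all n and t. Define U₃(n,t) = U₁(n,t) ⊗ U₂(n,t) and V₃(n,t) = V₁(n,t) ⊗ I_N + I_M ⊗ V₂(n,t). Then ∂_t U₃(n,t) = V₃(n+1,t) U₃(n,t) − U₃(n,t) V₃(n,t) for all n and t. -/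

import Mathlib

/-!
The mixed-product rule `(A ⊗ B)(C ⊗ D) = AC ⊗ BD` splits `V₃(n+1) U₃ - U₃ V₃` for the Kronecker
sum `V₃ = V₁ ⊗ I + I ⊗ V₂` into `(V₁(n+1) U₁ - U₁ V₁) ⊗ U₂ + U₁ ⊗ (V₂(n+1) U₂ - U₂ V₂)`, which is
`∂ₜU₁ ⊗ U₂ + U₁ ⊗ ∂ₜU₂ = ∂ₜ(U₁ ⊗ U₂)` by the Leibniz rule applied entrywise.
-/

open Matrix Kronecker

namespace Matrix

variable {l m n p α : Type*}

theorem sub_kronecker [NonUnitalNonAssocRing α] (A₁ A₂ : Matrix l m α) (B : Matrix n p α) :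
    (A₁ - A₂) ⊗ₖ B = A₁ ⊗ₖ B - A₂ ⊗ₖ B := by
  ext ⟨i₁, i₂⟩ ⟨j₁, j₂⟩
  exact sub_mul _ _ _

theorem kronecker_sub [NonUnitalNonAssocRing α] (A : Matrix l m α) (B₁ B₂ : Matrix n p α) :
    A ⊗ₖ (B₁ - B₂) = A ⊗ₖ B₁ - A ⊗ₖ B₂ := by
  ext ⟨i₁, i₂⟩ ⟨j₁, j₂⟩
  exact mul_sub _ _ _

def kroneckerSum [DecidableEq m] [DecidableEq n] [NonAssocSemiring α]
    (A : Matrix m m α) (B : Matrix n n α) : Matrix (m × n) (m × n) α :=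
  A ⊗ₖ (1 : Matrix n n α) + (1 : Matrix m m α) ⊗ₖ B

theorem kroneckerSum_mul_kronecker_sub_kronecker_mul_kroneckerSum
    [Fintype m] [Fintype n] [DecidableEq m] [DecidableEq n] [CommRing α]
    (A A' U : Matrix m m α) (B B' W : Matrix n n α) :
    kroneckerSum A' B' * (U ⊗ₖ W) - (U ⊗ₖ W) * kroneckerSum A B =
      (A' * U - U * A) ⊗ₖ W + U ⊗ₖ (B' * W - W * B) := by
  simp only [kroneckerSum, add_mul, mul_add, ← mul_kronecker_mul, one_mul, mul_one, sub_kronecker,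
    kronecker_sub]
  abel

theorem hasDerivAt_kronecker_apply {𝕜 : Type*} [NontriviallyNormedField 𝕜] [Fintype m]
    {A : 𝕜 → Matrix l m 𝕜} {B : 𝕜 → Matrix n p 𝕜} {A' : Matrix l m 𝕜} {B' : Matrix n p 𝕜}
    {t : 𝕜} (hA : ∀ i j, HasDerivAt (fun s => A s i j) (A' i j) t)
    (hB : ∀ i j, HasDerivAt (fun s => B s i j) (B' i j) t) (i j) :
    HasDerivAt (fun s => (A s ⊗ₖ B s) i j) ((A' ⊗ₖ B t + A t ⊗ₖ B') i j) t :=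
  (hA i.1 j.1).mul (hB i.2 j.2)

end Matrix

theorem kronecker_discrete_zero_curvature_general
    (M N : ℕ)
    (U₁ V₁ : ℤ → ℝ → Matrix (Fin M) (Fin M) ℝ)
    (U₂ V₂ : ℤ → ℝ → Matrix (Fin N) (Fin N) ℝ)
    (h₁ : ∀ (n : ℤ) (t : ℝ) (i j : Fin M),
      HasDerivAt (fun s => U₁ n s i j)
        ((V₁ (n + 1) t * U₁ n t - U₁ n t * V₁ n t) i j) t)
    (h₂ : ∀ (n : ℤ) (t : ℝ) (i j : Fin N),
      HasDerivAt (fun s => U₂ n s i j)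
        ((V₂ (n + 1) t * U₂ n t - U₂ n t * V₂ n t) i j) t)
    (U₃ V₃ : ℤ → ℝ → Matrix (Fin M × Fin N) (Fin M × Fin N) ℝ)
    (hU₃ : ∀ (n : ℤ) (t : ℝ), U₃ n t = U₁ n t ⊗ₖ U₂ n t)
    (hV₃ : ∀ (n : ℤ) (t : ℝ), V₃ n t =
      V₁ n t ⊗ₖ (1 : Matrix (Fin N) (Fin N) ℝ) +
      (1 : Matrix (Fin M) (Fin M) ℝ) ⊗ₖ V₂ n t) :
    ∀ (n : ℤ) (t : ℝ) (i j : Fin M × Fin N),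
      HasDerivAt (fun s => U₃ n s i j)
        ((V₃ (n + 1) t * U₃ n t - U₃ n t * V₃ n t) i j) t := by
  intro n t
  have hU : U₃ n = fun s => U₁ n s ⊗ₖ U₂ n s := funext (hU₃ n)
  have hV : ∀ n, V₃ n t = kroneckerSum (V₁ n t) (V₂ n t) := (hV₃ · t)
  rw [hU, hV, hV, kroneckerSum_mul_kronecker_sub_kronecker_mul_kroneckerSum]
  exact hasDerivAt_kronecker_apply (h₁ n t) (h₂ n t)

/-- **Theorem 3 (Discrete zero curvature representation via Kronecker product).**
If `∂ₜU₁(n) = V₁(n+1)U₁(n) - U₁(n)V₁(n)` and `∂ₜU₂(n) = V₂(n+1)U₂(n) - U₂(n)V₂(n)`,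
then `U₃ = U₁ ⊗ U₂`, `V₃ = V₁ ⊗ I_N + I_M ⊗ V₂` satisfy
`∂ₜU₃(n) = V₃(n+1)U₃(n) - U₃(n)V₃(n)`.  Time derivatives are taken entrywise. -/
theorem kronecker_discrete_zero_curvature
    (M N : ℕ) (hM : 0 < M) (hN : 0 < N)
    (U₁ V₁ : ℤ → ℝ → Matrix (Fin M) (Fin M) ℝ)
    (U₂ V₂ : ℤ → ℝ → Matrix (Fin N) (Fin N) ℝ)
    (h₁ : ∀ (n : ℤ) (t : ℝ) (i j : Fin M),
      HasDerivAt (fun s => U₁ n s i j)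
        ((V₁ (n + 1) t * U₁ n t - U₁ n t * V₁ n t) i j) t)
    (h₂ : ∀ (n : ℤ) (t : ℝ) (i j : Fin N),
      HasDerivAt (fun s => U₂ n s i j)
        ((V₂ (n + 1) t * U₂ n t - U₂ n t * V₂ n t) i j) t)
    (U₃ V₃ : ℤ → ℝ → Matrix (Fin M × Fin N) (Fin M × Fin N) ℝ)
    (hU₃ : ∀ (n : ℤ) (t : ℝ), U₃ n t = U₁ n t ⊗ₖ U₂ n t)
    (hV₃ : ∀ (n : ℤ) (t : ℝ), V₃ n t =
      V₁ n t ⊗ₖ (1 : Matrix (Fin N) (Fin N) ℝ) +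
      (1 : Matrix (Fin M) (Fin M) ℝ) ⊗ₖ V₂ n t) :
    ∀ (n : ℤ) (t : ℝ) (i j : Fin M × Fin N),
      HasDerivAt (fun s => U₃ n s i j)
        ((V₃ (n + 1) t * U₃ n t - U₃ n t * V₃ n t) i j) t :=
  kronecker_discrete_zero_curvature_general M N U₁ V₁ U₂ V₂ h₁ h₂ U₃ V₃ hU₃ hV₃
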